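/- arXiv:2106.06096 — 4 statements merged into one kernel-verified Lean document; each statement's English description precedes it below -/
import Mathlib

section
/- Let X and Y be normally distributed real random variables with the same mean μ and standard deviations 0 < s₁ ≤ s₂. Then the Kolmogorov–Smirnov distance d_KS(X,Y) := sup_{t∈ℝ} |P(X ≤ t) − P(Y ≤ t)| satisfies d_KS(X,Y) ≤ s₂/s₁ − 1. -/
/-!
After standardising, `P(X ≤ t) = Φ(c a)` and `P(Y ≤ t) = Φ(a)` with `a = (t - μ)/s₂` and
`c = s₂/s₁ ≥ 1`. The density `φ` is even and decreasing in `|x|`, so on the interval between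
`a` and `c a` it is at most `φ(a)`, whence `|Φ(c a) - Φ(a)| ≤ (c - 1) |a| φ(a)`; finally
`|a| φ(a) ≤ 1` because `|a| ≤ exp (a²/2)`.
-/

open MeasureTheory ProbabilityTheory Set
open scoped NNReal Real Interval

lemma gaussianReal_map_sub_div_sqrt {μ : ℝ} {v : ℝ≥0} (hv : v ≠ 0) :
    ((gaussianReal μ v).map fun x ↦ (x - μ) / √v) = gaussianReal 0 1 := by
  have : (fun x ↦ (x - μ) / √v) = (· / √v) ∘ (· - μ) := rfl
  rw [this, ← Measure.map_map (by fun_prop) (by fun_prop), gaussianReal_map_sub_const,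
    gaussianReal_map_div_const, sub_self, zero_div]
  congr
  ext
  simp [hv]

lemma cdf_gaussianReal {μ : ℝ} {v : ℝ≥0} (hv : v ≠ 0) (t : ℝ) :
    cdf (gaussianReal μ v) t = cdf (gaussianReal 0 1) ((t - μ) / √v) := by
  have hsqrt : 0 < √(v : ℝ) := Real.sqrt_pos.mpr (by positivity)
  rw [cdf_eq_real, cdf_eq_real, ← gaussianReal_map_sub_div_sqrt (μ := μ) hv,
    map_measureReal_apply (by fun_prop) measurableSet_Iic]
  congr 1
  ext x
  simp [div_le_div_iff_of_pos_right hsqrt]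

lemma cdf_gaussianReal_zero_one_sub (a b : ℝ) :
    cdf (gaussianReal 0 1) b - cdf (gaussianReal 0 1) a = ∫ x in a..b, gaussianPDFReal 0 1 x := by
  have h := (integrable_gaussianPDFReal 0 1).integrableOn (s := Iic a)
  rw [cdf_eq_real, cdf_eq_real, measureReal_def, measureReal_def,
    gaussianReal_apply_eq_integral _ one_ne_zero, gaussianReal_apply_eq_integral _ one_ne_zero,
    ENNReal.toReal_ofReal, ENNReal.toReal_ofReal,
    intervalIntegral.integral_Iic_sub_Iic h (integrable_gaussianPDFReal 0 1).integrableOn]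
  all_goals exact setIntegral_nonneg measurableSet_Iic fun x _ ↦ gaussianPDFReal_nonneg 0 1 x

lemma gaussianPDFReal_zero_one (x : ℝ) :
    gaussianPDFReal 0 1 x = (√(2 * π))⁻¹ * Real.exp (-x ^ 2 / 2) := by
  simp [gaussianPDFReal]

lemma gaussianPDFReal_zero_one_le_of_abs_le {x y : ℝ} (h : |x| ≤ |y|) :
    gaussianPDFReal 0 1 y ≤ gaussianPDFReal 0 1 x := by
  rw [gaussianPDFReal_zero_one, gaussianPDFReal_zero_one]
  have hsq : x ^ 2 ≤ y ^ 2 := sq_le_sq.mpr h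
  gcongr

lemma abs_mul_gaussianPDFReal_zero_one_le_one (x : ℝ) : |x| * gaussianPDFReal 0 1 x ≤ 1 := by
  have h2π : 1 ≤ √(2 * π) := Real.one_le_sqrt.mpr (by linarith [Real.pi_gt_three])
  have hexp : |x| ≤ Real.exp (x ^ 2 / 2) := by
    nlinarith [Real.add_one_le_exp (x ^ 2 / 2), sq_abs x]
  calc |x| * gaussianPDFReal 0 1 x
      = (√(2 * π))⁻¹ * (|x| * Real.exp (-x ^ 2 / 2)) := by
        rw [gaussianPDFReal_zero_one]; ring
    _ ≤ 1 * (Real.exp (x ^ 2 / 2) * Real.exp (-x ^ 2 / 2)) := by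
        gcongr
        exact inv_le_one_of_one_le₀ h2π
    _ = 1 := by rw [← Real.exp_add]; ring_nf; exact Real.exp_zero

lemma abs_le_abs_of_mem_uIoc_mul {a c y : ℝ} (hc : 1 ≤ c) (hy : y ∈ Ι a (c * a)) : |a| ≤ |y| := by
  rcases le_total 0 a with ha | ha
  · rw [uIoc_of_le (by nlinarith)] at hy
    rw [abs_of_nonneg ha, abs_of_nonneg (by linarith [hy.1])]
    exact hy.1.le
  · rw [uIoc_of_ge (by nlinarith)] at hy
    rw [abs_of_nonpos ha, abs_of_nonpos (hy.2.trans ha)]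
    linarith [hy.2]

lemma abs_cdf_gaussianReal_zero_one_mul_sub_le {c : ℝ} (hc : 1 ≤ c) (a : ℝ) :
    |cdf (gaussianReal 0 1) (c * a) - cdf (gaussianReal 0 1) a| ≤ c - 1 := by
  rw [cdf_gaussianReal_zero_one_sub, ← Real.norm_eq_abs]
  calc ‖∫ x in a..c * a, gaussianPDFReal 0 1 x‖
      ≤ gaussianPDFReal 0 1 a * |c * a - a| := by
        refine intervalIntegral.norm_integral_le_of_norm_le_const fun y hy ↦ ?_
        rw [Real.norm_of_nonneg (gaussianPDFReal_nonneg 0 1 y)]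
        exact gaussianPDFReal_zero_one_le_of_abs_le (abs_le_abs_of_mem_uIoc_mul hc hy)
    _ = (c - 1) * (|a| * gaussianPDFReal 0 1 a) := by
        rw [← sub_one_mul, abs_mul, abs_of_nonneg (by linarith)]; ring
    _ ≤ c - 1 := mul_le_of_le_one_right (by linarith) (abs_mul_gaussianPDFReal_zero_one_le_one a)

lemma measureReal_le_eq_cdf_gaussianReal_zero_one {Ω : Type*} [MeasurableSpace Ω]
    {P : Measure Ω} {Z : Ω → ℝ} (hZ : Measurable Z) {μ s : ℝ} {v : ℝ≥0} (hs : 0 < s)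
    (hv : (v : ℝ) = s ^ 2) (hlaw : P.map Z = gaussianReal μ v) (t : ℝ) :
    P.real {ω | Z ω ≤ t} = cdf (gaussianReal 0 1) ((t - μ) / s) := by
  have hv0 : v ≠ 0 := by rw [← NNReal.coe_ne_zero, hv]; positivity
  rw [← Real.sqrt_sq hs.le, ← hv, ← cdf_gaussianReal hv0, cdf_eq_real, ← hlaw,
    map_measureReal_apply hZ measurableSet_Iic]
  rfl

theorem stmt_0_general {Ω : Type*} [MeasurableSpace Ω] (P : Measure Ω)
    (X Y : Ω → ℝ) (hmX : Measurable X) (hmY : Measurable Y)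
    (μ s₁ s₂ : ℝ) (hs₁ : 0 < s₁) (hs : s₁ ≤ s₂)
    (hX : Measure.map X P = gaussianReal μ (⟨s₁ ^ 2, sq_nonneg s₁⟩ : ℝ≥0))
    (hY : Measure.map Y P = gaussianReal μ (⟨s₂ ^ 2, sq_nonneg s₂⟩ : ℝ≥0)) :
    (⨆ t : ℝ, |(P {ω | X ω ≤ t}).toReal - (P {ω | Y ω ≤ t}).toReal|) ≤ s₂ / s₁ - 1 := by
  have hs₂ : 0 < s₂ := hs₁.trans_le hs
  have hc : 1 ≤ s₂ / s₁ := (one_le_div hs₁).mpr hs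
  refine Real.iSup_le (fun t ↦ ?_) (by linarith)
  rw [← measureReal_def, ← measureReal_def,
    measureReal_le_eq_cdf_gaussianReal_zero_one hmX hs₁ rfl hX,
    measureReal_le_eq_cdf_gaussianReal_zero_one hmY hs₂ rfl hY]
  convert abs_cdf_gaussianReal_zero_one_mul_sub_le hc ((t - μ) / s₂) using 4
  field_simp

/-- If `X ~ N(μ, s₁²)` and `Y ~ N(μ, s₂²)` with `0 < s₁ ≤ s₂`, then the
Kolmogorov–Smirnov distance `sup_t |P(X ≤ t) − P(Y ≤ t)|` is at most `s₂/s₁ − 1`. -/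
theorem stmt_0 {Ω : Type*} [MeasurableSpace Ω] (P : Measure Ω) [IsProbabilityMeasure P]
    (X Y : Ω → ℝ) (hmX : Measurable X) (hmY : Measurable Y)
    (μ s₁ s₂ : ℝ) (hs₁ : 0 < s₁) (hs : s₁ ≤ s₂)
    (hX : Measure.map X P = gaussianReal μ (⟨s₁ ^ 2, sq_nonneg s₁⟩ : ℝ≥0))
    (hY : Measure.map Y P = gaussianReal μ (⟨s₂ ^ 2, sq_nonneg s₂⟩ : ℝ≥0)) :
    (⨆ t : ℝ, |(P {ω | X ω ≤ t}).toReal - (P {ω | Y ω ≤ t}).toReal|) ≤ s₂ / s₁ - 1 :=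
  stmt_0_general P X Y hmX hmY μ s₁ s₂ hs₁ hs hX hY
end

section
/- Let U be an n×n unitary matrix and define g(U) := i(I + U)(I − U)⁺, where (I − U)⁺ is the Moore–Penrose pseudoinverse of I − U. Then g(U) is self-adjoint (Hermitian). -/
open Matrix

/-- Uniqueness of the Moore–Penrose pseudoinverse from the four Penrose axioms. -/
lemma mp_unique {n : Type*} [Fintype n] [DecidableEq n] (B Q₁ Q₂ : Matrix n n ℂ)
    (h11 : B * Q₁ * B = B) (h12 : Q₁ * B * Q₁ = Q₁)
    (h13 : (B * Q₁)ᴴ = B * Q₁) (h14 : (Q₁ * B)ᴴ = Q₁ * B)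
    (h21 : B * Q₂ * B = B) (h22 : Q₂ * B * Q₂ = Q₂)
    (h23 : (B * Q₂)ᴴ = B * Q₂) (h24 : (Q₂ * B)ᴴ = Q₂ * B) :
    Q₁ = Q₂ := by
  have hBQ : B * Q₁ = B * Q₂ := by
    calc B * Q₁ = (B * Q₁)ᴴ := h13.symm
      _ = ((B * Q₂ * B) * Q₁)ᴴ := by rw [h21]
      _ = ((B * Q₂) * (B * Q₁))ᴴ := by rw [mul_assoc (B * Q₂), mul_assoc B Q₂]
      _ = (B * Q₁)ᴴ * (B * Q₂)ᴴ := by rw [conjTranspose_mul]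
      _ = (B * Q₁) * (B * Q₂) := by rw [h13, h23]
      _ = (B * Q₁ * B) * Q₂ := by rw [mul_assoc (B * Q₁)]
      _ = B * Q₂ := by rw [h11]
  have hQB : Q₁ * B = Q₂ * B := by
    calc Q₁ * B = (Q₁ * B)ᴴ := h14.symm
      _ = (Q₁ * (B * Q₂ * B))ᴴ := by rw [h21]
      _ = ((Q₁ * B) * (Q₂ * B))ᴴ := by
            rw [mul_assoc B Q₂, ← mul_assoc Q₁ B]
      _ = (Q₂ * B)ᴴ * (Q₁ * B)ᴴ := by rw [conjTranspose_mul]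
      _ = (Q₂ * B) * (Q₁ * B) := by rw [h14, h24]
      _ = (Q₂ * B * Q₁) * B := by rw [mul_assoc (Q₂ * B)]
      _ = Q₂ * (B * Q₁) * B := by rw [mul_assoc Q₂ B]
      _ = Q₂ * (B * Q₂) * B := by rw [hBQ]
      _ = Q₂ * B := by rw [mul_assoc Q₂ (B * Q₂) B, h21]
  calc Q₁ = Q₁ * B * Q₁ := h12.symm
    _ = Q₁ * B * Q₂ := by rw [mul_assoc, hBQ, ← mul_assoc]
    _ = Q₂ * B * Q₂ := by rw [hQB]
    _ = Q₂ := h22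

/-- For a unitary matrix `U`, the matrix `g(U) = i(I + U)(I − U)⁺` is Hermitian.
Here `P = (I − U)⁺` is the Moore–Penrose pseudoinverse of `I − U`, characterized by the four
Penrose axioms. -/
theorem stmt_5 {n : Type*} [Fintype n] [DecidableEq n] (U P : Matrix n n ℂ)
    (hU : U * Uᴴ = 1)
    (hP1 : (1 - U) * P * (1 - U) = 1 - U)
    (hP2 : P * (1 - U) * P = P)
    (hP3 : ((1 - U) * P)ᴴ = (1 - U) * P)
    (hP4 : (P * (1 - U))ᴴ = P * (1 - U)) :
    (Complex.I • ((1 + U) * P)).IsHermitian := by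
  have hUU : Uᴴ * U = 1 := mul_eq_one_comm.mp hU
  set A : Matrix n n ℂ := 1 - U with hA
  -- A commutes with Uᴴ
  have hAUh : A * Uᴴ = Uᴴ * A := by
    rw [hA, sub_mul, one_mul, hU, mul_sub, mul_one, hUU]
  -- Aᴴ in two useful forms
  have hB1 : Aᴴ = -(Uᴴ * A) := by
    rw [hA, conjTranspose_sub, conjTranspose_one, mul_sub, mul_one, hUU]
    abel
  have hB2 : Aᴴ = -(A * Uᴴ) := by rw [hB1, hAUh]
  -- reassociated forms of the Penrose axioms
  have hP1' : A * (P * A) = A := by rw [← mul_assoc]; exact hP1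
  have hP2' : P * (A * P) = P := by rw [← mul_assoc]; exact hP2
  have f1 : ∀ X : Matrix n n ℂ, U * (Uᴴ * X) = X := fun X => by
    rw [← mul_assoc, hU, one_mul]
  have f2 : ∀ X : Matrix n n ℂ, Uᴴ * (U * X) = X := fun X => by
    rw [← mul_assoc, hUU, one_mul]
  -- Pᴴ satisfies Penrose axioms for Aᴴ
  have g11 : Aᴴ * Pᴴ * Aᴴ = Aᴴ := by
    have := congrArg conjTranspose hP1
    simpa [conjTranspose_mul, mul_assoc] using this
  have g12 : Pᴴ * Aᴴ * Pᴴ = Pᴴ := by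
    have := congrArg conjTranspose hP2
    simpa [conjTranspose_mul, mul_assoc] using this
  have g13 : (Aᴴ * Pᴴ)ᴴ = Aᴴ * Pᴴ := by
    rw [← conjTranspose_mul, conjTranspose_conjTranspose]; exact hP4.symm
  have g14 : (Pᴴ * Aᴴ)ᴴ = Pᴴ * Aᴴ := by
    rw [← conjTranspose_mul, conjTranspose_conjTranspose]; exact hP3.symm
  -- -(P*U) satisfies Penrose axioms for Aᴴ
  have q11 : Aᴴ * -(P * U) * Aᴴ = Aᴴ := by
    rw [hB1]
    simp only [neg_mul, mul_neg, neg_neg, neg_inj, mul_assoc, f1]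
    rw [hP1']
  have q12 : -(P * U) * Aᴴ * -(P * U) = -(P * U) := by
    rw [hB1]
    simp only [neg_mul, mul_neg, neg_neg, neg_inj, mul_assoc, f1]
    rw [← mul_assoc A P U, ← mul_assoc P (A * P) U, hP2']
  have hAP : Aᴴ * -(P * U) = Uᴴ * (A * P * U) := by
    rw [hB1]
    simp only [neg_mul, mul_neg, neg_neg, mul_assoc]
  have q13 : (Aᴴ * -(P * U))ᴴ = Aᴴ * -(P * U) := by
    rw [hAP]
    simp only [conjTranspose_mul, conjTranspose_conjTranspose]
    rw [← conjTranspose_mul, hP3, mul_assoc]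
  have q14 : (-(P * U) * Aᴴ)ᴴ = -(P * U) * Aᴴ := by
    have h : -(P * U) * Aᴴ = P * A := by
      rw [hB1]
      simp only [mul_neg, neg_mul, neg_neg, mul_assoc, f1]
    rw [h, hP4]
  -- -(U*P) satisfies Penrose axioms for Aᴴ
  have r11 : Aᴴ * -(U * P) * Aᴴ = Aᴴ := by
    rw [hB2]
    simp only [neg_mul, mul_neg, neg_neg, neg_inj, mul_assoc, f2]
    rw [← mul_assoc P A Uᴴ, ← mul_assoc A (P * A) Uᴴ, hP1']
  have r12 : -(U * P) * Aᴴ * -(U * P) = -(U * P) := by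
    rw [hB2]
    simp only [neg_mul, mul_neg, neg_neg, neg_inj, mul_assoc, f2]
    rw [hP2']
  have r13 : (Aᴴ * -(U * P))ᴴ = Aᴴ * -(U * P) := by
    have h : Aᴴ * -(U * P) = A * P := by
      rw [hB2]
      simp only [mul_neg, neg_mul, neg_neg, mul_assoc, f2]
    rw [h, hP3]
  have r14 : (-(U * P) * Aᴴ)ᴴ = -(U * P) * Aᴴ := by
    have h : -(U * P) * Aᴴ = U * (P * A * Uᴴ) := by
      rw [hB2]
      simp only [mul_neg, neg_mul, neg_neg, mul_assoc]
    rw [h]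
    simp only [conjTranspose_mul, conjTranspose_conjTranspose]
    rw [← conjTranspose_mul, hP4, mul_assoc]
  -- uniqueness gives both descriptions of Pᴴ
  have hPT1 : Pᴴ = -(P * U) :=
    mp_unique Aᴴ Pᴴ (-(P * U)) g11 g12 g13 g14 q11 q12 q13 q14
  have hPT2 : Pᴴ = -(U * P) :=
    mp_unique Aᴴ Pᴴ (-(U * P)) g11 g12 g13 g14 r11 r12 r13 r14
  have hcomm : P * U = U * P := neg_inj.mp (hPT1.symm.trans hPT2)
  -- final computation
  show (Complex.I • ((1 + U) * P))ᴴ = Complex.I • ((1 + U) * P)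
  rw [conjTranspose_smul, conjTranspose_mul, conjTranspose_add, conjTranspose_one, hPT2]
  have hUPU : U * P * Uᴴ = P := by rw [← hcomm, mul_assoc, hU, mul_one]
  have key : U * P * (1 + Uᴴ) = (1 + U) * P := by
    rw [mul_add, mul_one, hUPU, add_mul, one_mul, add_comm]
  rw [neg_mul, key]
  simp [Complex.conj_I]
end

section
/- Let E > 1 and let S be a fixed 2E × 2E unitary matrix. Define, for κ ∈ 𝕋^E (the E-torus), U_κ := diag(e^{iκ₁},…,e^{iκ_E}, e^{iκ₁},…,e^{iκ_E})·S. Then there is no continuous counterclockwise ordering of the eigenvalues of the family (U_κ)_{κ∈𝕋^E}; more precisely, the winding number of κ ↦ det(U_κ) along the loop t ↦ (t,0,…,0) equals 2, which is not divisible by 2E. -/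
open Complex Set

lemma exists_clog (f : ℝ → ℂ) (hf : Continuous f) (h0 : ∀ t, f t ≠ 0) (b : ℝ) (hb : 0 ≤ b) :
    ∃ θ : ℝ → ℂ, Continuous θ ∧ ∀ t ∈ Set.Icc (0:ℝ) b, Complex.exp (θ t) = f t := by
  classical
  set c : ℝ → ℝ := fun t => max 0 (min t b) with hc
  have hcmem : ∀ t, c t ∈ Icc (0:ℝ) b := fun t =>
    ⟨le_max_left _ _, max_le (by linarith) (min_le_right _ _)⟩
  have hcid : ∀ t ∈ Icc (0:ℝ) b, c t = t := by
    intro t ht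
    simp [hc, min_eq_left ht.2, max_eq_right ht.1]
  have hccont : Continuous c := continuous_const.max (continuous_id.min continuous_const)
  have hclip : ∀ s t : ℝ, dist (c s) (c t) ≤ dist s t := by
    intro s t
    simp only [Real.dist_eq, hc]
    calc |max 0 (min s b) - max 0 (min t b)| ≤ max |0 - 0| |min s b - min t b| :=
          abs_max_sub_max_le_max _ _ _ _
      _ ≤ max |0-0| (max |s - t| |b - b|) :=
          max_le_max le_rfl (abs_min_sub_min_le_max _ _ _ _)
      _ ≤ |s - t| := by simp [abs_nonneg]
  set g : ℝ → ℂ := fun t => f (c t) with hg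
  have hgc : Continuous g := hf.comp hccont
  have hg0 : ∀ t, g t ≠ 0 := fun t => h0 _
  -- minimum of ‖f‖ on Icc
  obtain ⟨t₀, ht₀, hmin⟩ : ∃ t₀ ∈ Icc (0:ℝ) b, ∀ t ∈ Icc (0:ℝ) b, ‖f t₀‖ ≤ ‖f t‖ := by
    obtain ⟨t₀, ht₀, hmin⟩ := isCompact_Icc.exists_isMinOn (nonempty_Icc.mpr hb)
      (hf.norm.continuousOn)
    exact ⟨t₀, ht₀, fun t ht => hmin ht⟩
  set m : ℝ := ‖f t₀‖ with hm
  have hmpos : 0 < m := norm_pos_iff.mpr (h0 t₀)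
  have hmle : ∀ t, m ≤ ‖g t‖ := fun t => hmin _ (hcmem t)
  -- uniform continuity of f on Icc gives δ
  have hUC : UniformContinuousOn f (Icc 0 b) :=
    isCompact_Icc.uniformContinuousOn_of_continuous hf.continuousOn
  obtain ⟨δ, hδpos, hδ⟩ := (Metric.uniformContinuousOn_iff).mp hUC m hmpos
  have hgδ : ∀ s t : ℝ, dist s t ≤ δ/2 → ‖g s - g t‖ < m := by
    intro s t hst
    have := hδ (c s) (hcmem s) (c t) (hcmem t)
      (lt_of_le_of_lt ((hclip s t).trans hst) (by linarith))
    simpa [hg, dist_eq_norm] using this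
  -- ratio in slit plane
  have hslit : ∀ s t : ℝ, dist s t ≤ δ/2 → g s / g t ∈ slitPlane := by
    intro s t hst
    have h1 : ‖g s / g t - 1‖ < 1 := by
      rw [show g s / g t - 1 = (g s - g t) / g t by rw [sub_div, div_self (hg0 t)]]
      rw [norm_div, div_lt_one (norm_pos_iff.mpr (hg0 t))]
      exact lt_of_lt_of_le (hgδ s t hst) (hmle t)
    have h2 := mem_slitPlane_of_norm_lt_one h1
    have h3 : (1 : ℂ) + (g s / g t - 1) = g s / g t := by ring
    rwa [h3] at h2
  -- induction building the lift up to k * (δ/2)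
  have key : ∀ k : ℕ, ∃ θ : ℝ → ℂ, Continuous θ ∧
      ∀ t ∈ Icc (0:ℝ) (k * (δ/2)), Complex.exp (θ t) = g t := by
    intro k
    induction k with
    | zero =>
      refine ⟨fun _ => Complex.log (g 0), continuous_const, ?_⟩
      intro t ht
      simp only [Nat.cast_zero, zero_mul] at ht
      have : t = 0 := le_antisymm ht.2 ht.1
      rw [this, Complex.exp_log (hg0 0)]
    | succ k ih =>
      obtain ⟨θ, hθc, hθ⟩ := ih
      set e : ℝ := k * (δ/2) with he
      have hepos : 0 ≤ e := by positivity
      set c2 : ℝ → ℝ := fun t => max e (min t (e + δ/2)) with hc2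
      have hc2cont : Continuous c2 := continuous_const.max (continuous_id.min continuous_const)
      have hc2mem : ∀ t, e ≤ c2 t ∧ c2 t ≤ e + δ/2 := fun t =>
        ⟨le_max_left _ _, max_le (by linarith) (min_le_right _ _)⟩
      have hc2dist : ∀ t, dist (c2 t) e ≤ δ/2 := by
        intro t
        rw [Real.dist_eq, abs_le]
        constructor <;> [linarith [(hc2mem t).1, hδpos]; linarith [(hc2mem t).2]]
      set θ' : ℝ → ℂ := fun t =>
        if t ≤ e then θ t else θ e + Complex.log (g (c2 t) / g e) with hθ'
      have hbr2 : Continuous fun t => θ e + Complex.log (g (c2 t) / g e) := by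
        refine continuous_const.add ?_
        rw [continuous_iff_continuousAt]
        intro t
        refine (continuousAt_clog ?_).comp ?_
        · exact hslit _ _ (hc2dist t)
        · exact ((hgc.comp hc2cont).div_const _).continuousAt
      have hc2e : c2 e = e := by
        simp [hc2, min_eq_left (by linarith : e ≤ e + δ/2)]
      have hagree : ∀ t : ℝ, t = e → θ t = θ e + Complex.log (g (c2 t) / g e) := by
        intro t ht
        rw [ht, hc2e, div_self (hg0 e), Complex.log_one, add_zero]
      have hθ'c : Continuous θ' := by
        refine Continuous.if_le hθc hbr2 continuous_id continuous_const hagree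
      refine ⟨θ', hθ'c, ?_⟩
      intro t ht
      by_cases h : t ≤ e
      · have h4 : θ' t = θ t := if_pos h
        rw [h4]; exact hθ t ⟨ht.1, h⟩
      · push_neg at h
        have hc2t : c2 t = t := by
          have h2 : t ≤ e + δ/2 := by
            have := ht.2; push_cast at this; linarith
          simp [hc2, min_eq_left h2, max_eq_right h.le]
        have h5 : θ' t = θ e + Complex.log (g t / g e) := by
          simp only [hθ']
          rw [if_neg (not_le.mpr h), hc2t]
        rw [h5, Complex.exp_add, Complex.exp_log (div_ne_zero (hg0 t) (hg0 e)),
          hθ e ⟨hepos, le_refl e⟩]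
        rw [mul_comm, div_mul_eq_mul_div, div_eq_iff (hg0 e)]
  -- choose k large enough
  obtain ⟨k, hk⟩ := exists_nat_ge (b / (δ/2))
  obtain ⟨θ, hθc, hθ⟩ := key k
  refine ⟨θ, hθc, ?_⟩
  intro t ht
  have : t ∈ Icc (0:ℝ) (k * (δ/2)) := by
    constructor
    · exact ht.1
    · have : b ≤ k * (δ/2) := by
        rw [div_le_iff₀ (by linarith)] at hk
        linarith
      linarith [ht.2]
  rw [hθ t this]
  show f (c t) = f t
  rw [hcid t ht]

lemma int_valued_const {a b : ℝ} (hab : a ≤ b) (u : ℝ → ℝ)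
    (hu : ContinuousOn u (Set.Icc a b))
    (hint : ∀ t ∈ Set.Icc a b, ∃ k : ℤ, u t = k) : u a = u b := by
  have himg : IsPreconnected (u '' Set.Icc a b) := (isPreconnected_Icc).image u hu
  have ha : u a ∈ u '' Set.Icc a b := ⟨a, ⟨le_refl a, hab⟩, rfl⟩
  have hbm : u b ∈ u '' Set.Icc a b := ⟨b, ⟨hab, le_refl b⟩, rfl⟩
  obtain ⟨k1, hk1⟩ := hint a ⟨le_refl a, hab⟩
  obtain ⟨k2, hk2⟩ := hint b ⟨hab, le_refl b⟩
  have half : ∀ (p : ℤ) (m : ℤ), ((p:ℝ) + 1/2 = (m:ℝ)) → False := by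
    intro p m h
    have h1 : (p:ℝ) < m := by linarith
    have h2 : (m:ℝ) < p + 1 := by linarith
    rw [Int.cast_lt] at h1
    rw [show ((p:ℝ)+1) = ((p+1 : ℤ) : ℝ) by push_cast; ring, Int.cast_lt] at h2
    omega
  rcases lt_trichotomy (u a) (u b) with h | h | h
  · exfalso
    have hz : u a + 1/2 ∈ Set.Icc (u a) (u b) := by
      constructor
      · linarith
      · rw [hk1, hk2] at h ⊢
        rw [Int.cast_lt] at h
        have : (k1:ℝ) + 1 ≤ k2 := by
          rw [show ((k1:ℝ)+1) = ((k1+1 : ℤ) : ℝ) by push_cast; ring, Int.cast_le]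
          omega
        linarith
    have := himg.Icc_subset ha hbm hz
    obtain ⟨t, ht, hut⟩ := this
    obtain ⟨m, hm⟩ := hint t ht
    exact half k1 m (by rw [hk1] at hut; rw [← hut, hm])
  · exact h
  · exfalso
    have hz : u b + 1/2 ∈ Set.Icc (u b) (u a) := by
      constructor
      · linarith
      · rw [hk1, hk2] at h ⊢
        rw [Int.cast_lt] at h
        have : (k2:ℝ) + 1 ≤ k1 := by
          rw [show ((k2:ℝ)+1) = ((k2+1 : ℤ) : ℝ) by push_cast; ring, Int.cast_le]
          omega
        linarith
    have := himg.Icc_subset hbm ha hz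
    obtain ⟨t, ht, hut⟩ := this
    obtain ⟨m, hm⟩ := hint t ht
    exact half k2 m (by rw [hk2] at hut; rw [← hut, hm])


open Matrix
open scoped Real

/-- The family `U_κ = diag(e^{iκ₁},…,e^{iκ_E}, e^{iκ₁},…,e^{iκ_E}) S` of `2E × 2E`
unitary matrices, parametrized by `κ ∈ ℝ^E` (it is `2π`-periodic in each coordinate,
hence a family over the torus `𝕋^E`). -/
noncomputable def Ufam (E : ℕ) (S : Matrix (Fin E ⊕ Fin E) (Fin E ⊕ Fin E) ℂ)
    (κ : Fin E → ℝ) : Matrix (Fin E ⊕ Fin E) (Fin E ⊕ Fin E) ℂ :=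
  Matrix.diagonal (Sum.elim (fun j => Complex.exp (Complex.I * κ j))
    (fun j => Complex.exp (Complex.I * κ j))) * S

/-- For `E > 1` and `S` a `2E×2E` unitary matrix, the family `U_κ` over the
torus admits no continuous counterclockwise ordering of its eigenvalues; more precisely,
`det(U_κ) = e^{2it} det S` along the loop `t ↦ (t,0,…,0)`, so the winding number of the
determinant along this loop is `2`, which is not divisible by `2E`. -/
theorem stmt_15 (E : ℕ) (hE : 1 < E) (S : Matrix (Fin E ⊕ Fin E) (Fin E ⊕ Fin E) ℂ)
    (hS : S * Sᴴ = 1) :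
    (∀ t : ℝ, (Ufam E S fun j => if j = (⟨0, by omega⟩ : Fin E) then t else 0).det
        = Complex.exp (2 * Complex.I * t) * S.det) ∧
    ¬ ((2 * E : ℤ) ∣ 2) ∧
    ¬ ∃ (lam : Fin (2 * E) → (Fin E → ℝ) → ℂ) (a : Fin (2 * E) → (Fin E → ℝ) → ℝ),
      (∀ n, Continuous (lam n)) ∧ (∀ n, Continuous (a n)) ∧
      (∀ n κ, a n κ ∈ Set.Icc 0 (2 * π)) ∧
      (∀ n κ (j : Fin E), lam n (κ + Pi.single j (2 * π)) = lam n κ) ∧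
      (∀ n κ (j : Fin E), a n (κ + Pi.single j (2 * π)) = a n κ) ∧
      (∀ κ, (Ufam E S κ).charpoly
          = ∏ n, (Polynomial.X - Polynomial.C (lam n κ))) ∧
      (∀ κ, ∑ n, a n κ = 2 * π) ∧
      (∀ κ (n : Fin (2 * E)),
        lam ⟨((n : ℕ) + 1) % (2 * E), Nat.mod_lt _ (by omega)⟩ κ
          = lam n κ * Complex.exp (Complex.I * a n κ)) := by
  have hN : 0 < 2 * E := by omega
  have hdetS : S.det ≠ 0 := by
    have h := congrArg Matrix.det hS
    rw [Matrix.det_mul, Matrix.det_one] at h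
    exact left_ne_zero_of_mul_eq_one h
  have hpart1 : ∀ t : ℝ,
      (Ufam E S fun j => if j = (⟨0, by omega⟩ : Fin E) then t else 0).det
        = Complex.exp (2 * Complex.I * t) * S.det := by
    intro t
    rw [Ufam, det_mul, det_diagonal]
    congr 1
    rw [Fintype.prod_sum_type]
    simp only [Sum.elim_inl, Sum.elim_inr]
    have key : (∏ j : Fin E, Complex.exp (Complex.I *
        ((if j = (⟨0, by omega⟩ : Fin E) then t else 0 : ℝ) : ℂ)))
        = Complex.exp (Complex.I * t) := by
      have h1 : ∀ j : Fin E, Complex.exp (Complex.I *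
          ((if j = (⟨0, by omega⟩ : Fin E) then t else 0 : ℝ) : ℂ))
          = if j = (⟨0, by omega⟩ : Fin E) then Complex.exp (Complex.I * t) else 1 := by
        intro j; split <;> simp
      rw [Finset.prod_congr rfl (fun j _ => h1 j), Finset.prod_ite_eq']
      simp
    rw [key, ← Complex.exp_add]
    ring_nf
  have hpart2 : ¬ ((2 * E : ℤ) ∣ 2) := by
    intro h
    have h1 := Int.le_of_dvd (by norm_num) h
    have h2 : (2 : ℤ) ≤ E := by exact_mod_cast hE
    omega
  refine ⟨hpart1, hpart2, ?_⟩
  rintro ⟨lam, a, hlamc, hac, hamem, hlamper, haper, hchar, hasum, hrec⟩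
  -- determinant = product of eigenvalues
  have hdetprod : ∀ κ, (Ufam E S κ).det = ∏ n, lam n κ := by
    intro κ
    have h1 := Matrix.det_eq_sign_charpoly_coeff (Ufam E S κ)
    rw [hchar κ, Polynomial.coeff_zero_eq_eval_zero, Polynomial.eval_prod] at h1
    simp only [Polynomial.eval_sub, Polynomial.eval_X, Polynomial.eval_C, zero_sub] at h1
    rw [h1]
    have h2 : (∏ n : Fin (2*E), (-(lam n κ))) = (-1:ℂ)^(2*E) * ∏ n, lam n κ := by
      calc (∏ n : Fin (2*E), (-(lam n κ)))
          = ∏ n : Fin (2*E), ((-1) * lam n κ) :=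
            Finset.prod_congr rfl fun n _ => (neg_one_mul _).symm
        _ = (∏ _n : Fin (2*E), (-1:ℂ)) * ∏ n, lam n κ := Finset.prod_mul_distrib
        _ = (-1:ℂ)^(2*E) * ∏ n, lam n κ := by
            rw [Finset.prod_const, Finset.card_univ, Fintype.card_fin]
    rw [h2, Even.neg_one_pow (even_two_mul E)]
    have h3 : Fintype.card (Fin E ⊕ Fin E) = E + E := by
      simp [Fintype.card_sum]
    rw [h3, Even.neg_one_pow (Even.add_self E)]
    ring
  -- the loop
  set j0 : Fin E := ⟨0, by omega⟩ with hj0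
  set γ : ℝ → (Fin E → ℝ) := fun t => fun j => if j = j0 then t else 0 with hγ
  have hγc : Continuous γ := by
    apply continuous_pi
    intro j
    by_cases hj : j = j0 <;> simp [hγ, hj] <;> fun_prop
  have hγper : γ (2*π) = γ 0 + Pi.single j0 (2*π) := by
    funext j
    by_cases hj : j = j0 <;> simp [hγ, hj, Pi.single_apply]
  -- sequence of eigenvalues indexed by ℕ
  set Lf : ℕ → (Fin E → ℝ) → ℂ := fun n κ => lam ⟨n % (2*E), Nat.mod_lt _ hN⟩ κ with hLf
  set Af : ℕ → (Fin E → ℝ) → ℝ := fun n κ => a ⟨n % (2*E), Nat.mod_lt _ hN⟩ κ with hAf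
  have hLrec : ∀ (κ : Fin E → ℝ) (n : ℕ),
      Lf (n+1) κ = Lf n κ * Complex.exp (Complex.I * Af n κ) := by
    intro κ n
    have h := hrec κ ⟨n % (2*E), Nat.mod_lt _ hN⟩
    have he : Lf (n+1) κ = lam ⟨((n % (2*E) : ℕ) + 1) % (2*E), Nat.mod_lt _ hN⟩ κ := by
      simp only [hLf]
      congr 1
      exact Fin.ext (Nat.mod_add_mod n (2*E) 1).symm
    rw [he]
    exact h
  have hLsum : ∀ (κ : Fin E → ℝ) (n : ℕ), Lf n κ = Lf 0 κ *
      Complex.exp (Complex.I * ((∑ m ∈ Finset.range n, Af m κ : ℝ) : ℂ)) := by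
    intro κ n
    induction n with
    | zero => simp
    | succ n ih =>
      rw [hLrec κ n, ih, Finset.sum_range_succ]
      push_cast
      rw [mul_assoc, ← Complex.exp_add]
      ring_nf
  set T : (Fin E → ℝ) → ℝ :=
    fun κ => ∑ n ∈ Finset.range (2*E), ∑ m ∈ Finset.range n, Af m κ with hT
  have hprod : ∀ κ, (∏ n, lam n κ) = (Lf 0 κ)^(2*E) *
      Complex.exp (Complex.I * (T κ : ℂ)) := by
    intro κ
    calc (∏ n, lam n κ) = ∏ n ∈ Finset.range (2*E), Lf n κ := by
          rw [← Fin.prod_univ_eq_prod_range (fun n => Lf n κ) (2*E)]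
          apply Finset.prod_congr rfl
          intro n _
          simp only [hLf]
          congr 1
          exact (Fin.ext (Nat.mod_eq_of_lt n.isLt)).symm
      _ = ∏ n ∈ Finset.range (2*E), (Lf 0 κ *
            Complex.exp (Complex.I * ((∑ m ∈ Finset.range n, Af m κ : ℝ) : ℂ))) :=
          Finset.prod_congr rfl fun n _ => hLsum κ n
      _ = (Lf 0 κ)^(2*E) * Complex.exp (Complex.I * (T κ : ℂ)) := by
          rw [Finset.prod_mul_distrib, Finset.prod_const, Finset.card_range]
          congr 1
          rw [← Complex.exp_sum]
          congr 1
          rw [← Finset.mul_sum]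
          congr 1
          push_cast [hT]
          rfl
  -- key equation along the loop
  have keyEq : ∀ t : ℝ, (Lf 0 (γ t))^(2*E) * Complex.exp (Complex.I * (T (γ t) : ℂ))
      = Complex.exp (2 * Complex.I * t) * S.det := by
    intro t
    have h1 := hpart1 t
    rw [hdetprod, hprod] at h1
    exact h1
  set f : ℝ → ℂ := fun t => Lf 0 (γ t) with hf
  set τ : ℝ → ℝ := fun t => T (γ t) with hτ
  have hfc : Continuous f := (hlamc _).comp hγc
  have hτc : Continuous τ := by
    have : Continuous fun t => ∑ n ∈ Finset.range (2*E), ∑ m ∈ Finset.range n, Af m (γ t) := by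
      apply continuous_finset_sum
      intro n _
      apply continuous_finset_sum
      intro m _
      exact (hac _).comp hγc
    exact this
  have hfne : ∀ t, f t ≠ 0 := by
    intro t h
    have h1 := keyEq t
    rw [show Lf 0 (γ t) = f t from rfl, h, zero_pow (by omega), zero_mul] at h1
    exact (mul_ne_zero (Complex.exp_ne_zero _) hdetS) h1.symm
  have hf2π : f (2*π) = f 0 := by
    show Lf 0 (γ (2*π)) = Lf 0 (γ 0)
    rw [hγper]
    exact hlamper _ _ j0
  have hτ2π : τ (2*π) = τ 0 := by
    show T (γ (2*π)) = T (γ 0)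
    rw [hγper]
    exact Finset.sum_congr rfl fun n _ => Finset.sum_congr rfl fun m _ => haper _ _ j0
  -- lift of f
  obtain ⟨θ, hθc, hθ⟩ := exists_clog f hfc hfne (2*π) (by positivity)
  set H : ℝ → ℂ := fun t => (2*E : ℂ) * θ t + Complex.I * (τ t : ℂ) - 2*Complex.I*(t:ℂ)
    with hH
  have hHc : Continuous H := by
    apply Continuous.sub
    · exact (continuous_const.mul hθc).add
        (continuous_const.mul (Complex.continuous_ofReal.comp hτc))
    · exact continuous_const.mul Complex.continuous_ofReal
  have h2πIne : (2*(π:ℂ)*Complex.I) ≠ 0 :=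
    mul_ne_zero (mul_ne_zero two_ne_zero (by exact_mod_cast Real.pi_ne_zero))
      Complex.I_ne_zero
  have hmem0 : (0:ℝ) ∈ Set.Icc (0:ℝ) (2*π) := ⟨le_refl 0, by positivity⟩
  have hmem2π : (2*π) ∈ Set.Icc (0:ℝ) (2*π) := ⟨by positivity, le_refl _⟩
  have hexp : ∀ t ∈ Set.Icc (0:ℝ) (2*π), Complex.exp (H t) = S.det := by
    intro t ht
    have e1 : Complex.exp ((2*E:ℂ) * θ t) = f t ^ (2*E) := by
      rw [show ((2*E:ℂ)) = ((2*E : ℕ) : ℂ) by push_cast; ring]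
      rw [Complex.exp_nat_mul, hθ t ht]
    calc Complex.exp (H t)
        = Complex.exp ((2*E:ℂ) * θ t) * Complex.exp (Complex.I * (τ t : ℂ)) /
            Complex.exp (2*Complex.I*(t:ℂ)) := by
          rw [hH]
          rw [Complex.exp_sub, Complex.exp_add]
      _ = (f t ^ (2*E) * Complex.exp (Complex.I * (τ t : ℂ))) /
            Complex.exp (2*Complex.I*(t:ℂ)) := by rw [e1]
      _ = (Complex.exp (2 * Complex.I * (t:ℂ)) * S.det) /
            Complex.exp (2*Complex.I*(t:ℂ)) := by rw [show f t = Lf 0 (γ t) from rfl, keyEq t]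
      _ = S.det := by
          rw [mul_comm, mul_div_assoc, div_self (Complex.exp_ne_zero _), mul_one]
  -- integer-valued winding function
  set u : ℝ → ℝ := fun t => ((H t - H 0) / (2*(π:ℂ)*Complex.I)).re with hu
  have huc : Continuous u :=
    Complex.continuous_re.comp ((hHc.sub continuous_const).div_const _)
  have huint : ∀ t ∈ Set.Icc (0:ℝ) (2*π),
      ∃ k : ℤ, u t = k ∧ H t = H 0 + k * (2*(π:ℂ)*Complex.I) := by
    intro t ht
    have h6 : Complex.exp (H t) = Complex.exp (H 0) := by
      rw [hexp t ht, hexp 0 hmem0]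
    obtain ⟨k, hk⟩ := Complex.exp_eq_exp_iff_exists_int.mp h6
    refine ⟨k, ?_, hk⟩
    show ((H t - H 0) / (2*(π:ℂ)*Complex.I)).re = k
    rw [hk, show (H 0 + k * (2*(π:ℂ)*Complex.I) - H 0) = (k:ℂ)*(2*(π:ℂ)*Complex.I) by ring,
      mul_div_cancel_right₀ _ h2πIne]
    simp
  have hu0 : u 0 = 0 := by
    show ((H 0 - H 0) / (2*(π:ℂ)*Complex.I)).re = 0
    simp
  have huend : u 0 = u (2*π) :=
    int_valued_const (by positivity) u huc.continuousOn
      (fun t ht => (huint t ht).imp fun k hk => hk.1)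
  obtain ⟨k2, hk2u, hk2⟩ := huint (2*π) hmem2π
  have hk2z : (k2:ℝ) = 0 := by rw [← hk2u, ← huend, hu0]
  have hk2z' : (k2:ℂ) = 0 := by exact_mod_cast hk2z
  have hHeq : H (2*π) = H 0 := by rw [hk2, hk2z', zero_mul, add_zero]
  -- extract the contradiction
  have hτceq : ((τ (2*π) : ℝ) : ℂ) = ((τ 0 : ℝ) : ℂ) := by rw [hτ2π]
  have hHexp : (2*E:ℂ) * θ (2*π) + Complex.I * ((τ (2*π) : ℝ) : ℂ) - 2*Complex.I*((2*π:ℝ):ℂ)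
      = (2*E:ℂ) * θ 0 + Complex.I * ((τ 0 : ℝ) : ℂ) - 2*Complex.I*((0:ℝ):ℂ) := hHeq
  have hjump : (2*E:ℂ) * (θ (2*π) - θ 0) = 4*(π:ℂ)*Complex.I := by
    push_cast at hHexp
    linear_combination hHexp - Complex.I * hτceq
  have h6 : Complex.exp (θ (2*π)) = Complex.exp (θ 0) := by
    rw [hθ _ hmem2π, hθ _ hmem0]
    exact hf2π
  obtain ⟨k, hk⟩ := Complex.exp_eq_exp_iff_exists_int.mp h6
  have hfinal : ((2*E:ℂ)*(k:ℂ)) * (2*(π:ℂ)*Complex.I) = 2 * (2*(π:ℂ)*Complex.I) := by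
    rw [hk] at hjump
    linear_combination hjump
  have hek : (2*E:ℂ)*(k:ℂ) = 2 := mul_right_cancel₀ h2πIne hfinal
  have hekz : (2*(E:ℤ))*k = 2 := by exact_mod_cast hek
  exact hpart2 ⟨k, hekz.symm⟩
end

section
/- Let (U_x)_{x∈M} be a continuous family of N×N unitary matrices over a topological space M admitting a continuous counterclockwise ordering of eigenvalues λ₁,…,λ_N : M → S¹ with continuous phase gaps a_n : M → [0,2π]. Then for every loop γ in M, the winding number of det(U_x) = λ₁⋯λ_N along γ equals N times the winding number of λ₁ along γ; in particular it is divisible by N. -/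
open Matrix

/-- Suppose a continuous family of `N×N` unitary matrices `(U_x)_{x∈M}` admits
a continuous counterclockwise ordering of its eigenvalues: continuous `λ_n : M → S¹`
listing the eigenvalues with multiplicity (via the characteristic polynomial) and continuous
phase gaps `a_n : M → [0,2π]` with `Σ a_n = 2π` and `λ_{n+1} = λ_n e^{ia_n}` cyclically.
Then along every loop `γ` the winding number of `det(U_x) = λ₁⋯λ_N` equals `N` times the
winding number of `λ₁`: for any continuous phase lifts `θdet` of `det ∘ U ∘ γ` and `θλ` of
`λ₁ ∘ γ`, we have `θdet(1) − θdet(0) = N (θλ(1) − θλ(0))`; in particular the winding number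
of the determinant is divisible by `N`. -/
theorem stmt_16 {M : Type*} [TopologicalSpace M] (N : ℕ) (hN : 0 < N)
    (U : M → Matrix (Fin N) (Fin N) ℂ)
    (hUcont : ∀ i j, Continuous fun x => U x i j)
    (hUuni : ∀ x, U x * (U x)ᴴ = 1)
    (lam : Fin N → M → ℂ) (a : Fin N → M → ℝ)
    (hlamc : ∀ n, Continuous (lam n)) (hac : ∀ n, Continuous (a n))
    (harange : ∀ n x, a n x ∈ Set.Icc 0 (2 * Real.pi))
    (hchar : ∀ x, (U x).charpoly = ∏ n, (Polynomial.X - Polynomial.C (lam n x)))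
    (hasum : ∀ x, ∑ n, a n x = 2 * Real.pi)
    (hcyc : ∀ x (n : Fin N), lam ⟨((n : ℕ) + 1) % N, Nat.mod_lt _ hN⟩ x
        = lam n x * Complex.exp (Complex.I * a n x))
    (γ : ℝ → M) (hγ : ContinuousOn γ (Set.Icc 0 1)) (hloop : γ 0 = γ 1)
    (θdet θlam : ℝ → ℝ)
    (hθd : ContinuousOn θdet (Set.Icc 0 1)) (hθl : ContinuousOn θlam (Set.Icc 0 1))
    (hliftd : ∀ t ∈ Set.Icc (0 : ℝ) 1, (U (γ t)).det = Complex.exp (Complex.I * θdet t))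
    (hliftl : ∀ t ∈ Set.Icc (0 : ℝ) 1, lam ⟨0, hN⟩ (γ t) = Complex.exp (Complex.I * θlam t)) :
    θdet 1 - θdet 0 = N * (θlam 1 - θlam 0) := by
  -- Step A: det = product of eigenvalues
  have hdet : ∀ x, (U x).det = ∏ n, lam n x := by
    intro x
    have h := Matrix.det_eq_sign_charpoly_coeff (U x)
    rw [hchar x] at h
    rw [h]
    have hc : (∏ n, (Polynomial.X - Polynomial.C (lam n x))).coeff 0
        = ∏ n, (-(lam n x)) := by
      rw [Polynomial.coeff_zero_eq_eval_zero]
      simp [Polynomial.eval_prod]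
    rw [hc]
    have : ∀ n : Fin N, -lam n x = (-1) * lam n x := fun n => by ring
    simp only [this, Finset.prod_mul_distrib, Finset.prod_const, Fintype.card_fin,
      Finset.card_univ]
    rw [← mul_assoc, ← mul_pow]
    simp
  -- Step B: every eigenvalue is lam 0 times exp of partial gap sums
  have key : ∀ (x : M) (m : ℕ), lam ⟨m % N, Nat.mod_lt _ hN⟩ x
      = lam ⟨0, hN⟩ x * Complex.exp (Complex.I *
          (∑ k ∈ Finset.range m, a ⟨k % N, Nat.mod_lt _ hN⟩ x : ℝ)) := by
    intro x m
    induction m with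
    | zero => simp [Nat.zero_mod]
    | succ m ih =>
      have h1 : (m + 1) % N = ((m % N) + 1) % N := (Nat.mod_add_mod m N 1).symm
      have h2 : lam ⟨(m + 1) % N, Nat.mod_lt _ hN⟩ x
          = lam ⟨((m % N) + 1) % N, Nat.mod_lt _ hN⟩ x := by
        congr 1
        exact Fin.ext h1
      rw [h2, hcyc x ⟨m % N, Nat.mod_lt _ hN⟩, ih, Finset.sum_range_succ]
      push_cast
      rw [mul_add, Complex.exp_add]
      ring
  have keyn : ∀ (x : M) (n : Fin N), lam n x
      = lam ⟨0, hN⟩ x * Complex.exp (Complex.I *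
          (∑ k ∈ Finset.range (n : ℕ), a ⟨k % N, Nat.mod_lt _ hN⟩ x : ℝ)) := by
    intro x n
    have := key x (n : ℕ)
    rwa [show (⟨(n : ℕ) % N, Nat.mod_lt _ hN⟩ : Fin N) = n by
      ext; simp [Nat.mod_eq_of_lt n.isLt]] at this
  -- the total phase function
  set S : M → ℝ := fun x => ∑ n : Fin N,
      ∑ k ∈ Finset.range (n : ℕ), a ⟨k % N, Nat.mod_lt _ hN⟩ x with hS
  have hScont : Continuous S := by
    apply continuous_finset_sum
    intro n _
    exact continuous_finset_sum _ fun k _ => hac _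
  -- Step C: det = lam0^N * exp(I S)
  have hprod : ∀ x, (U x).det = lam ⟨0, hN⟩ x ^ N * Complex.exp (Complex.I * (S x : ℝ)) := by
    intro x
    rw [hdet x]
    calc ∏ n, lam n x
        = ∏ n : Fin N, (lam ⟨0, hN⟩ x * Complex.exp (Complex.I *
            (∑ k ∈ Finset.range (n : ℕ), a ⟨k % N, Nat.mod_lt _ hN⟩ x : ℝ))) := by
          exact Finset.prod_congr rfl fun n _ => keyn x n
      _ = lam ⟨0, hN⟩ x ^ N * Complex.exp (Complex.I * (S x : ℝ)) := by
          rw [Finset.prod_mul_distrib, Finset.prod_const, Finset.card_univ, Fintype.card_fin,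
            ← Complex.exp_sum]
          congr 1
          rw [← Finset.mul_sum]
          congr 1
          push_cast [hS]
          rfl
  -- Step D: the phase discrepancy is a continuous 2πℤ-valued function
  set f : ℝ → ℝ := fun t => θdet t - N * θlam t - S (γ t) with hf
  have hfc : ContinuousOn f (Set.Icc 0 1) := by
    apply ContinuousOn.sub
    · exact hθd.sub (continuousOn_const.mul hθl)
    · exact (hScont.comp_continuousOn hγ)
  have hfint : ∀ t ∈ Set.Icc (0 : ℝ) 1, ∃ k : ℤ, f t = 2 * Real.pi * k := by
    intro t ht
    have h1 : Complex.exp (Complex.I * θdet t)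
        = Complex.exp (Complex.I * (N * θlam t + S (γ t) : ℝ)) := by
      rw [← hliftd t ht, hprod (γ t), hliftl t ht, ← Complex.exp_nat_mul, ← Complex.exp_add]
      congr 1
      push_cast
      ring
    have h2 : Complex.exp (Complex.I * θdet t - Complex.I * (N * θlam t + S (γ t) : ℝ)) = 1 := by
      rw [Complex.exp_sub, h1, div_self (Complex.exp_ne_zero _)]
    rw [Complex.exp_eq_one_iff] at h2
    obtain ⟨k, hk⟩ := h2
    refine ⟨k, ?_⟩
    have : (Complex.I : ℂ) * ((θdet t : ℝ) - (N * θlam t + S (γ t) : ℝ) : ℝ)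
        = Complex.I * ((2 * Real.pi * k : ℝ) : ℂ) := by
      push_cast
      push_cast at hk
      linear_combination hk
    have h3 := mul_left_cancel₀ Complex.I_ne_zero this
    have h4 : (θdet t - (N * θlam t + S (γ t)) : ℝ) = (2 * Real.pi * k : ℝ) := by
      exact_mod_cast h3
    simp only [hf]
    linarith
  -- f is constant: by IVT, since its values lie in 2πℤ
  obtain ⟨k0, hk0⟩ := hfint 0 (by norm_num)
  obtain ⟨k1, hk1⟩ := hfint 1 (by norm_num)
  have hkeq : k0 = k1 := by
    by_contra hne
    have hicc : Set.uIcc (0:ℝ) 1 = Set.Icc 0 1 := by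
      rw [Set.uIcc_of_le]; norm_num
    have hiv := intermediate_value_uIcc (by rw [hicc]; exact hfc)
    set c : ℝ := 2 * Real.pi * k0 + (if k0 < k1 then Real.pi else -Real.pi) with hc
    have hcmem : c ∈ Set.uIcc (f 0) (f 1) := by
      rw [Set.mem_uIcc, hk0, hk1]
      have hpi := Real.pi_pos
      rcases lt_or_gt_of_ne hne with h | h
      · left
        rw [hc, if_pos h]
        have h01 : (k0 : ℝ) + 1 ≤ k1 := by exact_mod_cast h
        constructor
        · linarith
        · nlinarith
      · right
        rw [hc, if_neg (not_lt.mpr h.le)]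
        have h01 : (k1 : ℝ) + 1 ≤ k0 := by exact_mod_cast h
        constructor
        · nlinarith
        · linarith
    obtain ⟨t, ht, hft⟩ := hiv hcmem
    rw [hicc] at ht
    obtain ⟨kt, hkt⟩ := hfint t ht
    rw [hft] at hkt
    have hpi := Real.pi_ne_zero
    rcases lt_or_gt_of_ne hne with h | h
    · rw [hc, if_pos h] at hkt
      have : (2 * (kt - k0) : ℝ) = 1 := by
        have hz : Real.pi * ((2 * (kt - k0) : ℝ) - 1) = 0 := by push_cast at hkt ⊢; linarith
        rcases mul_eq_zero.mp hz with h' | h'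
        · exact absurd h' hpi
        · linarith
      have : (2 * (kt - k0) : ℤ) = 1 := by exact_mod_cast this
      omega
    · rw [hc, if_neg (not_lt.mpr h.le)] at hkt
      have : (2 * (kt - k0) : ℝ) = -1 := by
        have hz : Real.pi * ((2 * (kt - k0) : ℝ) + 1) = 0 := by push_cast at hkt ⊢; linarith
        rcases mul_eq_zero.mp hz with h' | h'
        · exact absurd h' hpi
        · linarith
      have : (2 * (kt - k0) : ℤ) = -1 := by exact_mod_cast this
      omega
  have : f 1 = f 0 := by rw [hk0, hk1, hkeq]
  simp only [hf] at this
  rw [← hloop] at this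
  linarith
end
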